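/- Let (d_l) be the Wright sequence with d_1 = d_2 = 5/36 and d_{l+1} = d_l + Σ_{i=1}^{l-1} d_i d_{l-i}/((l+1)·binom(l,i)), converging to limit d. Then d - d_l ≤ 8d^2 / (l-1) for all l ≥ 2 (in particular d - d_l = O(1/l)). -/

import Mathlib

/-!
The sequence is nonnegative and increasing from `d 1` on, so `d i ≤ D` for `i ≥ 1`. Bounding each
product `d i * d (l - i)` by `D²` and using `∑_{0<i<l} 1 / choose l i ≤ 4 / l` gives
`d (l + 1) - d l ≤ 4 D² / (l (l + 1)) = 4 D² (1 / l - 1 / (l + 1))`, which telescopes to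
`D - d l ≤ 4 D² / l ≤ 8 D² / (l - 1)`.
-/

open Finset Filter Topology

theorem Nat.choose_le_choose_right_of_le_half {n r s : ℕ} (hrs : r ≤ s) (hs : s ≤ n / 2) :
    n.choose r ≤ n.choose s := by
  induction s, hrs using Nat.le_induction with
  | base => rfl
  | succ s _ ih => exact (ih (by omega)).trans (Nat.choose_le_succ_of_lt_half_left (by omega))

theorem Nat.choose_two_le_choose {n k : ℕ} (hk : 2 ≤ k) (hkn : k + 2 ≤ n) :
    n.choose 2 ≤ n.choose k := by
  rcases le_or_gt k (n / 2) with hk' | hk'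
  · exact Nat.choose_le_choose_right_of_le_half hk hk'
  · rw [← Nat.choose_symm (by omega : k ≤ n)]
    exact Nat.choose_le_choose_right_of_le_half (by omega) (by omega)

-- The two end terms equal `1 / l`; every other term is at most `1 / choose l 2`.
theorem inv_choose_le_ite {l i : ℕ} (hi : i ∈ Icc 1 (l - 1)) :
    ((l.choose i : ℝ))⁻¹ ≤
      (if i = 1 then (l : ℝ)⁻¹ else 0) + (if i = l - 1 then (l : ℝ)⁻¹ else 0) +
        2 / ((l : ℝ) * (l - 1)) := by
  rw [mem_Icc] at hi
  have hl : (2 : ℝ) ≤ l := by exact_mod_cast (by omega : 2 ≤ l)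
  have hmid : 0 ≤ 2 / ((l : ℝ) * (l - 1)) := div_nonneg zero_le_two (by nlinarith)
  have hfirst : 0 ≤ (if i = 1 then (l : ℝ)⁻¹ else 0) := by positivity
  have hlast : 0 ≤ (if i = l - 1 then (l : ℝ)⁻¹ else 0) := by positivity
  by_cases hend : i = 1 ∨ i = l - 1
  · have hc : l.choose i = l := by
      rcases hend with rfl | rfl
      exacts [Nat.choose_one_right l,
        (Nat.choose_symm_of_eq_add (by omega)).trans (Nat.choose_one_right l)]
    rw [hc]
    rcases hend with h | h
    · rw [if_pos h]; linarith
    · rw [if_pos h]; linarith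
  rw [not_or] at hend
  obtain ⟨h1, h2⟩ := hend
  rw [if_neg h1, if_neg h2, zero_add, zero_add]
  have hc : ((l.choose 2 : ℕ) : ℝ) ≤ l.choose i := by
    exact_mod_cast Nat.choose_two_le_choose (by omega) (by omega)
  rw [Nat.cast_choose_two] at hc
  rw [← one_div, div_le_div_iff₀ (by exact_mod_cast Nat.choose_pos (by omega)) (by nlinarith)]
  linarith

theorem sum_inv_choose_le {l : ℕ} (hl : 2 ≤ l) :
    ∑ i ∈ Icc 1 (l - 1), ((l.choose i : ℝ))⁻¹ ≤ 4 / l := by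
  have hlR : (2 : ℝ) ≤ l := by exact_mod_cast hl
  calc ∑ i ∈ Icc 1 (l - 1), ((l.choose i : ℝ))⁻¹
      ≤ ∑ i ∈ Icc 1 (l - 1), ((if i = 1 then (l : ℝ)⁻¹ else 0) +
          (if i = l - 1 then (l : ℝ)⁻¹ else 0) + 2 / ((l : ℝ) * (l - 1))) :=
        sum_le_sum fun i hi => inv_choose_le_ite hi
    _ = 4 / l := by
        rw [sum_add_distrib, sum_add_distrib, sum_ite_eq', sum_ite_eq', sum_const, Nat.card_Icc,
          if_pos (by simp; omega), if_pos (by simp; omega), nsmul_eq_mul,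
          Nat.add_sub_cancel, Nat.cast_sub (by omega : 1 ≤ l)]
        have : (l : ℝ) - 1 ≠ 0 := by linarith
        field_simp
        ring

theorem sub_le_div_of_tendsto_of_succ_sub_le {a : ℕ → ℝ} {A C : ℝ} {l : ℕ} (hl : 0 < l)
    (hlim : Tendsto a atTop (𝓝 A)) (hstep : ∀ n ≥ l, a (n + 1) - a n ≤ C / (n * (n + 1))) :
    A - a l ≤ C / l := by
  -- `a n + C / n` is antitone from `l` on and tends to `A`.
  set b : ℕ → ℝ := fun k => a (k + l) + C / ((k + l : ℕ) : ℝ)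
  have hanti : Antitone b := by
    refine antitone_nat_of_succ_le fun k => ?_
    have hpos : (0 : ℝ) < (k + l : ℕ) := by exact_mod_cast (by omega : 0 < k + l)
    have h := hstep (k + l) (by omega)
    simp only [b, add_right_comm k 1 l, Nat.cast_succ] at h ⊢
    have : C / ((k + l : ℕ) : ℝ) - C / ((k + l : ℕ) + 1) =
        C / ((k + l : ℕ) * ((k + l : ℕ) + 1)) := by
      field_simp
      ring
    linarith
  have hb : Tendsto b atTop (𝓝 (A + 0)) :=
    ((tendsto_add_atTop_iff_nat l).mpr hlim).add <| tendsto_const_nhds.div_atTop <|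
      tendsto_natCast_atTop_atTop.comp (tendsto_add_atTop_nat l)
  have := hanti.le_of_tendsto hb 0
  simp only [b, zero_add] at this
  linarith

noncomputable def wrightIncrement (d : ℕ → ℝ) (l : ℕ) : ℝ :=
  ∑ i ∈ Icc 1 (l - 1), d i * d (l - i) / (((l : ℝ) + 1) * (l.choose i))

def WrightRecurrence (d : ℕ → ℝ) : Prop :=
  ∀ l ≥ 2, d (l + 1) = d l + wrightIncrement d l

variable {d : ℕ → ℝ}

theorem wrightIncrement_nonneg {l : ℕ} (hd : ∀ i ∈ Icc 1 (l - 1), 0 ≤ d i) :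
    0 ≤ wrightIncrement d l := by
  refine sum_nonneg fun i hi => div_nonneg (mul_nonneg (hd i hi) (hd (l - i) ?_)) (by positivity)
  rw [mem_Icc] at hi ⊢
  omega

theorem wrightIncrement_le {l : ℕ} {D : ℝ} (hl : 2 ≤ l) (hd : ∀ i ∈ Icc 1 (l - 1), 0 ≤ d i)
    (hdD : ∀ i ∈ Icc 1 (l - 1), d i ≤ D) :
    wrightIncrement d l ≤ 4 * D ^ 2 / (l * (l + 1)) := by
  have hlR : (2 : ℝ) ≤ l := by exact_mod_cast hl
  have hterm : ∀ i ∈ Icc 1 (l - 1), d i * d (l - i) / (((l : ℝ) + 1) * (l.choose i)) ≤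
      D ^ 2 / (((l : ℝ) + 1) * (l.choose i)) := by
    intro i hi
    have hi' : l - i ∈ Icc 1 (l - 1) := by rw [mem_Icc] at hi ⊢; omega
    have hnum : d i * d (l - i) ≤ D ^ 2 :=
      sq D ▸ mul_le_mul (hdD i hi) (hdD _ hi') (hd _ hi') ((hd i hi).trans (hdD i hi))
    gcongr
  calc wrightIncrement d l
      ≤ ∑ i ∈ Icc 1 (l - 1), D ^ 2 / (((l : ℝ) + 1) * (l.choose i)) := sum_le_sum hterm
    _ = D ^ 2 / (l + 1) * ∑ i ∈ Icc 1 (l - 1), ((l.choose i : ℝ))⁻¹ := by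
        rw [mul_sum]
        exact sum_congr rfl fun i _ => by rw [div_mul_eq_div_div, div_eq_mul_inv]
    _ ≤ D ^ 2 / (l + 1) * (4 / l) := by gcongr; exact sum_inv_choose_le hl
    _ = 4 * D ^ 2 / (l * (l + 1)) := by field_simp

namespace WrightRecurrence

theorem nonneg (hrec : WrightRecurrence d) (h1 : 0 ≤ d 1) (h2 : 0 ≤ d 2) :
    ∀ k ≥ 1, 0 ≤ d k := by
  intro k
  induction k using Nat.strong_induction_on with
  | _ k ih =>
    intro hk
    match k, hk with
    | 1, _ => exact h1
    | 2, _ => exact h2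
    | l + 3, _ =>
      rw [hrec (l + 2) (by omega)]
      exact add_nonneg (ih _ (by omega) (by omega)) <| wrightIncrement_nonneg fun i hi => by
        rw [mem_Icc] at hi; exact ih i (by omega) hi.1

theorem monotone_succ (hrec : WrightRecurrence d) (h1 : 0 ≤ d 1) (h12 : d 1 ≤ d 2) :
    Monotone fun k => d (k + 1) := by
  have hd := hrec.nonneg h1 (h1.trans h12)
  refine monotone_nat_of_le_succ fun k => ?_
  rcases k with _ | l
  · exact h12
  · rw [hrec (l + 2) (by omega)]
    exact le_add_of_nonneg_right (wrightIncrement_nonneg fun i hi => hd i (mem_Icc.1 hi).1)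

theorem le_of_tendsto (hrec : WrightRecurrence d) (h1 : 0 ≤ d 1) (h12 : d 1 ≤ d 2) {D : ℝ}
    (hlim : Tendsto d atTop (𝓝 D)) {k : ℕ} (hk : 1 ≤ k) : d k ≤ D := by
  obtain ⟨j, rfl⟩ := Nat.exists_eq_add_of_le' hk
  exact (hrec.monotone_succ h1 h12).ge_of_tendsto ((tendsto_add_atTop_iff_nat 1).mpr hlim) j

theorem succ_sub_le (hrec : WrightRecurrence d) (h1 : 0 ≤ d 1) (h12 : d 1 ≤ d 2) {D : ℝ}
    (hlim : Tendsto d atTop (𝓝 D)) {l : ℕ} (hl : 2 ≤ l) :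
    d (l + 1) - d l ≤ 4 * D ^ 2 / (l * (l + 1)) := by
  rw [hrec l hl, add_sub_cancel_left]
  exact wrightIncrement_le hl (fun i hi => hrec.nonneg h1 (h1.trans h12) i (mem_Icc.1 hi).1)
    (fun i hi => hrec.le_of_tendsto h1 h12 hlim (mem_Icc.1 hi).1)

end WrightRecurrence

/-- For Wright's sequence `d_l` converging to a limit `D`, one has
`D - d_l ≤ 8 D² / (l - 1)` for all `l ≥ 2` (so `D - d_l = O(1/l)`). -/
theorem stmt2 (d : ℕ → ℝ) (h1 : d 1 = 5 / 36) (h2 : d 2 = 5 / 36)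
    (hrec : ∀ l ≥ 2, d (l + 1) =
      d l + ∑ i ∈ Finset.Icc 1 (l - 1), d i * d (l - i) / (((l : ℝ) + 1) * (l.choose i)))
    (D : ℝ) (hlim : Filter.Tendsto d Filter.atTop (nhds D)) :
    ∀ l ≥ 2, D - d l ≤ 8 * D ^ 2 / ((l : ℝ) - 1) := by
  intro l hl
  have hW : WrightRecurrence d := hrec
  have h1_nonneg : 0 ≤ d 1 := by rw [h1]; norm_num
  have h12 : d 1 ≤ d 2 := by rw [h1, h2]
  have hlR : (2 : ℝ) ≤ l := by exact_mod_cast hl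
  calc D - d l ≤ 4 * D ^ 2 / l :=
        sub_le_div_of_tendsto_of_succ_sub_le (by omega) hlim fun n hn =>
          hW.succ_sub_le h1_nonneg h12 hlim (hl.trans hn)
    _ ≤ 8 * D ^ 2 / (l - 1) := by
        rw [div_le_div_iff₀ (by linarith) (by linarith)]
        nlinarith [sq_nonneg D]
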